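/- arXiv:1903.04869 — 3 statements merged into one kernel-verified Lean document; each statement's English description precedes it below -/
import Mathlib

section
/- Let X₁,…,Xₙ be independent random variables taking values in a set 𝒳 and let f : 𝒳ⁿ → ℝ be measurable with f(X) square-integrable. Then Var(f(X)) = (1/2) Σ_{i=1}^n E[(f(X) − f(X^{(i)})) (f(X^{[i−1]}) − f(X^{[i]}))]. -/
/-!
Put `F k = E[f(X) f(X^{[k]})]`. Since `X` and `X^{[n]} = X'` are independent copies,
`Var f(X) = F 0 - F n`, which telescopes into `∑ᵢ (F (i-1) - F i)`. Exchanging `X_i` with `X'_i`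
preserves the joint law of `(X, X')` and turns `(X, X^{(i)}, X^{[i-1]}, X^{[i]})` into
`(X^{(i)}, X, X^{[i]}, X^{[i-1]})`; expanding the `i`-th summand of the formula, its four terms
therefore pair up into `2 (F (i-1) - F i)`.
-/

open MeasureTheory ProbabilityTheory

open Classical in
/-- The random vector obtained from `X` by replacing the coordinates indexed by `A`
by the corresponding coordinates of the independent copy `X'`. -/
noncomputable def resample {Ω 𝒳 : Type*} {n : ℕ} (X X' : Fin n → Ω → 𝒳)
    (A : Set (Fin n)) (ω : Ω) : Fin n → 𝒳 :=
  fun i => if i ∈ A then X' i ω else X i ω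

open Classical in
noncomputable def Equiv.sumSwapOn {ι : Type*} (A : Set ι) : Equiv.Perm (ι ⊕ ι) :=
  Function.Involutive.toPerm
    (Sum.elim (fun j => if j ∈ A then .inr j else .inl j)
      (fun j => if j ∈ A then .inl j else .inr j))
    (by rintro (j | j) <;> by_cases hj : j ∈ A <;> simp [hj])

namespace Equiv

variable {ι : Type*}

open Classical in
@[simp]
lemma sumSwapOn_inl (A : Set ι) (j : ι) :
    sumSwapOn A (.inl j) = if j ∈ A then .inr j else .inl j := rfl

open Classical in
@[simp]
lemma sumSwapOn_inr (A : Set ι) (j : ι) :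
    sumSwapOn A (.inr j) = if j ∈ A then .inl j else .inr j := rfl

lemma sumSwapOn_sumSwapOn (A B : Set ι) (k : ι ⊕ ι) :
    sumSwapOn B (sumSwapOn A k) = sumSwapOn (symmDiff A B) k := by
  rcases k with j | j <;> by_cases hA : j ∈ A <;> by_cases hB : j ∈ B <;>
    simp [hA, hB, Set.mem_symmDiff]

end Equiv

namespace ProbabilityTheory

variable {Ω 𝒳 : Type*} [MeasurableSpace Ω] [MeasurableSpace 𝒳] {P : Measure Ω}

lemma iIndepFun.identDistrib_comp_perm {ι : Type*} [Fintype ι] {Y : ι → Ω → 𝒳}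
    (hY : ∀ k, Measurable (Y k)) (hind : iIndepFun Y P) (σ : Equiv.Perm ι)
    (hσ : ∀ k, IdentDistrib (Y (σ k)) (Y k) P P) :
    IdentDistrib (fun ω k => Y (σ k) ω) (fun ω k => Y k ω) P P where
  aemeasurable_fst := (measurable_pi_lambda _ fun k => hY (σ k)).aemeasurable
  aemeasurable_snd := (measurable_pi_lambda _ hY).aemeasurable
  map_eq := by
    rw [(hind.precomp σ.injective).map_fun_eq_pi_map fun k => (hY (σ k)).aemeasurable,
      hind.map_fun_eq_pi_map fun k => (hY k).aemeasurable]
    exact congrArg Measure.pi (funext fun k => (hσ k).map_eq)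

lemma iIndepFun.indepFun_sumElim {ι κ : Type*} [Fintype ι] [Fintype κ]
    {Y : ι → Ω → 𝒳} {Y' : κ → Ω → 𝒳} (hind : iIndepFun (Sum.elim Y Y') P)
    (hY : ∀ i, Measurable (Y i)) (hY' : ∀ j, Measurable (Y' j)) :
    IndepFun (fun ω i => Y i ω) (fun ω j => Y' j ω) P := by
  have hST : Disjoint (Finset.univ.map (.inl : ι ↪ ι ⊕ κ)) (Finset.univ.map .inr) := by
    simp [Finset.disjoint_left]
  exact (hind.indepFun_finset _ _ hST (Sum.forall.2 ⟨hY, hY'⟩)).comp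
    (φ := fun y i => y ⟨.inl i, by simp⟩) (ψ := fun y j => y ⟨.inr j, by simp⟩)
    (measurable_pi_lambda _ fun _ => measurable_pi_apply _)
    (measurable_pi_lambda _ fun _ => measurable_pi_apply _)

lemma integral_sub_mul_sub_of_swap {a b c d : Ω → ℝ}
    (ha : MemLp a 2 P) (hb : MemLp b 2 P) (hc : MemLp c 2 P) (hd : MemLp d 2 P)
    (hbd : ∫ ω, b ω * d ω ∂P = ∫ ω, a ω * c ω ∂P)
    (hbc : ∫ ω, b ω * c ω ∂P = ∫ ω, a ω * d ω ∂P) :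
    ∫ ω, (a ω - b ω) * (c ω - d ω) ∂P
      = 2 * (∫ ω, a ω * c ω ∂P - ∫ ω, a ω * d ω ∂P) := by
  have hac : Integrable (fun ω => a ω * c ω) P := ha.integrable_mul hc
  have had : Integrable (fun ω => a ω * d ω) P := ha.integrable_mul hd
  have hbc' : Integrable (fun ω => b ω * c ω) P := hb.integrable_mul hc
  have hbd' : Integrable (fun ω => b ω * d ω) P := hb.integrable_mul hd
  calc ∫ ω, (a ω - b ω) * (c ω - d ω) ∂P
      = ∫ ω, (a ω * c ω - a ω * d ω) - (b ω * c ω - b ω * d ω) ∂P := by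
        congr 1; ext ω; ring
    _ = 2 * (∫ ω, a ω * c ω ∂P - ∫ ω, a ω * d ω ∂P) := by
        rw [integral_sub (f := fun ω => a ω * c ω - a ω * d ω)
          (g := fun ω => b ω * c ω - b ω * d ω) (hac.sub had) (hbc'.sub hbd'),
          integral_sub hac had, integral_sub hbc' hbd', hbd, hbc]
        ring

end ProbabilityTheory

section Resample

variable {Ω 𝒳 : Type*} {n : ℕ} {X X' : Fin n → Ω → 𝒳}

lemma resample_eq_sumSwapOn (A : Set (Fin n)) (ω : Ω) :
    resample X X' A ω = fun j => Sum.elim X X' (Equiv.sumSwapOn A (.inl j)) ω := by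
  funext j
  by_cases hj : j ∈ A <;> simp [resample, hj]

lemma resample_empty (ω : Ω) : resample X X' ∅ ω = fun j => X j ω := by
  funext j; simp [resample]

lemma resample_univ (ω : Ω) : resample X X' .univ ω = fun j => X' j ω := by
  funext j; simp [resample]

lemma setOf_lt_symmDiff_singleton (i : Fin n) :
    symmDiff {j : Fin n | (j : ℕ) < i} {i} = {j : Fin n | (j : ℕ) ≤ i} := by
  ext j
  simp only [Set.mem_symmDiff, Set.mem_ofPred_eq, Set.mem_singleton_iff]
  grind

variable [MeasurableSpace Ω] [MeasurableSpace 𝒳]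

def SwapInvariant (X X' : Fin n → Ω → 𝒳) (P : Measure Ω) : Prop :=
  ∀ A : Set (Fin n), IdentDistrib (fun ω k => Sum.elim X X' (Equiv.sumSwapOn A k) ω)
    (fun ω k => Sum.elim X X' k ω) P P

variable {P : Measure Ω}

lemma swapInvariant_of_iIndepFun (hmeas : ∀ i, Measurable (X i))
    (hmeas' : ∀ i, Measurable (X' i)) (hindep : iIndepFun (Sum.elim X X') P)
    (hid : ∀ i, IdentDistrib (X' i) (X i) P P) : SwapInvariant X X' P := by
  intro A
  refine hindep.identDistrib_comp_perm (Sum.forall.2 ⟨hmeas, hmeas'⟩) _ ?_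
  rintro (j | j) <;> by_cases hj : j ∈ A <;>
    simp [hj, hid j, (hid j).symm, IdentDistrib.refl (hmeas j).aemeasurable,
      IdentDistrib.refl (hmeas' j).aemeasurable]

namespace SwapInvariant

variable (hswap : SwapInvariant X X' P) {f : (Fin n → 𝒳) → ℝ} (hf : Measurable f)
include hswap

lemma identDistrib_resample (A : Set (Fin n)) :
    IdentDistrib (resample X X' A) (fun ω j => X j ω) P P := by
  convert (hswap A).comp
    (measurable_pi_lambda (fun z j => z (Sum.inl j)) fun j => measurable_pi_apply (Sum.inl j))
    using 1
  · exact funext (resample_eq_sumSwapOn A)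
  · rfl

include hf

lemma memLp_comp_resample (hL2 : MemLp (fun ω => f (fun j => X j ω)) 2 P) (A : Set (Fin n)) :
    MemLp (fun ω => f (resample X X' A ω)) 2 P :=
  ((hswap.identDistrib_resample A).comp hf).memLp_iff.2 hL2

lemma integral_mul_resample_symmDiff (A C B : Set (Fin n)) :
    ∫ ω, f (resample X X' (symmDiff A B) ω) * f (resample X X' (symmDiff C B) ω) ∂P
      = ∫ ω, f (resample X X' A ω) * f (resample X X' C ω) ∂P := by
  let G : (Fin n ⊕ Fin n → 𝒳) → ℝ := fun z =>
    f (fun j => z (Equiv.sumSwapOn A (.inl j))) * f (fun j => z (Equiv.sumSwapOn C (.inl j)))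
  have hG : Measurable G := by unfold G; fun_prop
  convert ((hswap B).comp hG).integral_eq using 2 <;>
    simp only [G, Function.comp_def, resample_eq_sumSwapOn, Equiv.sumSwapOn_sumSwapOn]

lemma integral_sub_mul_sub_resample (hL2 : MemLp (fun ω => f (fun j => X j ω)) 2 P)
    (i : Fin n) :
    ∫ ω, (f (fun j => X j ω) - f (resample X X' {i} ω)) *
        (f (resample X X' {j | (j : ℕ) < i} ω) - f (resample X X' {j | (j : ℕ) ≤ i} ω)) ∂P
      = 2 * (∫ ω, f (fun j => X j ω) * f (resample X X' {j | (j : ℕ) < i} ω) ∂P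
        - ∫ ω, f (fun j => X j ω) * f (resample X X' {j | (j : ℕ) ≤ i} ω) ∂P) := by
  have hswap_i (C : Set (Fin n)) := hswap.integral_mul_resample_symmDiff hf ∅ C {i}
  simp only [← Set.bot_eq_empty, bot_symmDiff] at hswap_i
  simp only [Set.bot_eq_empty, resample_empty] at hswap_i
  refine integral_sub_mul_sub_of_swap hL2 (hswap.memLp_comp_resample hf hL2 _)
    (hswap.memLp_comp_resample hf hL2 _) (hswap.memLp_comp_resample hf hL2 _) ?_ ?_
  · have h := hswap_i {j | (j : ℕ) < i}
    rwa [setOf_lt_symmDiff_singleton] at h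
  · have hle : symmDiff {j : Fin n | (j : ℕ) ≤ i} {i} = {j : Fin n | (j : ℕ) < i} := by
      rw [← setOf_lt_symmDiff_singleton, symmDiff_symmDiff_cancel_right]
    have h := hswap_i {j | (j : ℕ) ≤ i}
    rwa [hle] at h

lemma integral_mul_resample_univ (hmeas : ∀ i, Measurable (X i))
    (hmeas' : ∀ i, Measurable (X' i)) (hindep : iIndepFun (Sum.elim X X') P) :
    ∫ ω, f (fun j => X j ω) * f (resample X X' .univ ω) ∂P
      = (∫ ω, f (fun j => X j ω) ∂P) ^ 2 := by
  have hX' : IdentDistrib (fun ω j => X' j ω) (fun ω j => X j ω) P P := by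
    simpa only [funext resample_univ] using hswap.identDistrib_resample .univ
  have hmeasX : Measurable fun ω j => X j ω := measurable_pi_lambda _ hmeas
  have hmeasX' : Measurable fun ω j => X' j ω := measurable_pi_lambda _ hmeas'
  have hE : ∫ ω, f (fun j => X' j ω) ∂P = ∫ ω, f (fun j => X j ω) ∂P :=
    (hX'.comp hf).integral_eq
  have hXX' : IndepFun (fun ω => f (fun j => X j ω)) (fun ω => f (fun j => X' j ω)) P :=
    (hindep.indepFun_sumElim hmeas hmeas').comp hf hf
  simp only [resample_univ]
  rw [hXX'.integral_fun_mul_eq_mul_integral (hf.comp hmeasX).aestronglyMeasurable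
    (hf.comp hmeasX').aestronglyMeasurable, hE, sq]

end SwapInvariant

end Resample

/-- Chatterjee's variance formula: if `X₁, …, Xₙ` are independent random variables and
`X'` is an independent copy of `X`, then
`Var(f(X)) = (1/2) ∑ᵢ E[(f(X) − f(X^{(i)})) (f(X^{[i−1]}) − f(X^{[i]}))]`,
where (in 1-based notation) `X^{(i)}` resamples the `i`-th coordinate and `X^{[i]}`
resamples the first `i` coordinates. -/
theorem chatterjee_variance_formula
    {Ω : Type*} [MeasurableSpace Ω] (P : Measure Ω) [IsProbabilityMeasure P]
    {𝒳 : Type*} [MeasurableSpace 𝒳] (n : ℕ)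
    (X X' : Fin n → Ω → 𝒳)
    (hmeas : ∀ i, Measurable (X i)) (hmeas' : ∀ i, Measurable (X' i))
    (hindep : iIndepFun (Sum.elim X X' : Fin n ⊕ Fin n → Ω → 𝒳) P)
    (hid : ∀ i, IdentDistrib (X' i) (X i) P P)
    (f : (Fin n → 𝒳) → ℝ) (hf : Measurable f)
    (hL2 : MemLp (fun ω => f (fun i => X i ω)) 2 P) :
    variance (fun ω => f (fun i => X i ω)) P
      = (1 / 2) * ∑ i : Fin n, ∫ ω,
          (f (fun j => X j ω) - f (resample X X' {i} ω)) *
            (f (resample X X' {j | (j : ℕ) < (i : ℕ)} ω) -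
              f (resample X X' {j | (j : ℕ) ≤ (i : ℕ)} ω)) ∂P := by
  have hswap := swapInvariant_of_iIndepFun hmeas hmeas' hindep hid
  let F : ℕ → ℝ := fun k => ∫ ω, f (fun j => X j ω) * f (resample X X' {j | (j : ℕ) < k} ω) ∂P
  have hF0 : F 0 = ∫ ω, f (fun j => X j ω) ^ 2 ∂P := by
    simp [F, resample_empty, sq]
  have hFn : F n = (∫ ω, f (fun j => X j ω) ∂P) ^ 2 := by
    simpa [F] using hswap.integral_mul_resample_univ hf hmeas hmeas' hindep
  have hFsucc (i : Fin n) : F (i + 1) =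
      ∫ ω, f (fun j => X j ω) * f (resample X X' {j | (j : ℕ) ≤ i} ω) ∂P := by
    simp only [F, Nat.lt_add_one_iff]
  calc variance (fun ω => f (fun i => X i ω)) P
      = F 0 - F n := by rw [variance_eq_sub hL2, hF0, hFn]; rfl
    _ = ∑ i : Fin n, (F i - F (i + 1)) := by
      rw [Fin.sum_univ_eq_sum_range (fun k => F k - F (k + 1)), Finset.sum_range_sub']
    _ = _ := by
      rw [Finset.mul_sum]
      refine Finset.sum_congr rfl fun i _ => ?_
      rw [hswap.integral_sub_mul_sub_resample hf hL2 i, hFsucc]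
      ring
end

section
/- Let X₁,…,Xₙ be independent random variables taking values in a set 𝒳, let f : 𝒳ⁿ → ℝ be measurable with f(X) square-integrable, let σ be a fixed permutation of {1,…,n}, and fix i ∈ {1,…,n−1} and j ∈ {1,…,n} with j ∉ σ([i]). Define A_i = E[(f(X) − f(X^{(σ(i))})) (f(X^{σ([i−1])}) − f(X^{σ([i])}))]. Then A_i ≥ E[(f(X) − f(X^{(σ(i))})) (f(X^{σ([i−1]) ∪ {j}}) − f(X^{σ([i]) ∪ {j}}))] ≥ 0. -/
/-!
With `k = σ(i)`, both expectations have the form `E[h(X) h(X^B)]`, where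
`h := f(x) - f(x^{(k)})` is a function of both copies `(x, x')` and `B = σ([i−1])`, resp.
`σ([i−1]) ∪ {j}`. Since `k ∉ B`, `h` does not read the coordinates of `x'` in `B`, so
`E[h(X) h(X^B)]` does not change if the coordinates in `B` are resampled from a fresh copy
instead of from `X'`. In that form, writing `E_B h` for `h` averaged over the coordinates in
`B`, Fubini gives `E[h(Y) h(Y^{B ∪ C})] = E[E_B h(Y) · E_B h(Y^C)]`. With `C = ∅` this is
`E[(E_B h)^2] ≥ 0`; with `B ⊆ C` it is at most `E[(E_B h)^2]` by `2ab ≤ a^2 + b^2`, because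
`Y^C` has the law of `Y`.
-/

open MeasureTheory ProbabilityTheory

theorem measurePreserving_prodProdProdComm {α β γ δ : Type*} [MeasurableSpace α]
    [MeasurableSpace β] [MeasurableSpace γ] [MeasurableSpace δ] (μa : Measure α)
    (μb : Measure β) (μc : Measure γ) (μd : Measure δ) [SFinite μa] [SFinite μb]
    [SFinite μc] [SFinite μd] :
    MeasurePreserving (fun p : (α × β) × γ × δ => ((p.1.1, p.2.1), (p.1.2, p.2.2)))
      ((μa.prod μb).prod (μc.prod μd)) ((μa.prod μc).prod (μb.prod μd)) :=
  (measurePreserving_prodAssoc μa μc (μb.prod μd)).symm.comp <|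
    ((MeasurePreserving.id μa).prod <| (measurePreserving_prodAssoc μc μb μd).comp <|
      (Measure.measurePreserving_swap.prod (MeasurePreserving.id μd)).comp
        (measurePreserving_prodAssoc μb μc μd).symm).comp
    (measurePreserving_prodAssoc μa μb (μc.prod μd))

theorem MeasureTheory.MeasurePreserving.integral_comp_of_aestronglyMeasurable {α β G : Type*}
    [MeasurableSpace α] [MeasurableSpace β] [NormedAddCommGroup G] [NormedSpace ℝ G]
    {μ : Measure α} {ν : Measure β} {f : α → β} (hf : MeasurePreserving f μ ν)
    {g : β → G} (hg : AEStronglyMeasurable g ν) :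
    ∫ x, g (f x) ∂μ = ∫ y, g y ∂ν := by
  rw [← hf.map_eq] at hg ⊢
  exact (integral_map hf.measurable.aemeasurable hg).symm

theorem measurePreserving_comp_equiv {ι α : Type*} [Fintype ι] [MeasurableSpace α]
    (ν : ι → Measure α) [∀ i, SigmaFinite (ν i)] (e : ι ≃ ι)
    (he : ∀ i, ν (e i) = ν i) :
    MeasurePreserving (fun y : ι → α => y ∘ e) (Measure.pi ν) (Measure.pi ν) := by
  have hν : (fun i => ν (e.symm i)) = ν := funext fun i => by
    simpa using (he (e.symm i)).symm
  have h := measurePreserving_piCongrLeft (α := fun _ : ι => α) (μ := ν) e.symm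
  rw [hν] at h
  convert h using 1
  ext y i
  simp [MeasurableEquiv.coe_piCongrLeft, Equiv.piCongrLeft_apply]

section Resampling

open scoped Classical

variable {ι : Type*} {E : ι → Type*}

noncomputable def resampleProd (s : Set ι) (h : (∀ i, E i) → ℝ)
    (p : (∀ i, E i) × (∀ i, E i)) : ℝ :=
  h p.1 * h (s.piecewise p.2 p.1)

theorem resampleProd_empty (v : (∀ i, E i) → ℝ) :
    resampleProd ∅ v = fun p => v p.1 ^ 2 := by
  ext p
  rw [resampleProd, Set.piecewise_empty, sq]

variable [Fintype ι] [∀ i, MeasurableSpace (E i)] (μ : ∀ i, Measure (E i))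
  [∀ i, IsProbabilityMeasure (μ i)]

theorem measurePreserving_piecewise (s : Set ι) :
    MeasurePreserving (fun p : (∀ i, E i) × (∀ i, E i) => s.piecewise p.2 p.1)
      ((Measure.pi μ).prod (Measure.pi μ)) (Measure.pi μ) := by
  have hmeas : Measurable (fun p : (∀ i, E i) × (∀ i, E i) => s.piecewise p.2 p.1) :=
    measurable_pi_lambda _ fun i => by
      by_cases hi : i ∈ s
      · simp only [Set.piecewise, hi, if_true]; fun_prop
      · simp only [Set.piecewise, hi, if_false]; fun_prop
  refine ⟨hmeas, (Measure.pi_eq fun t ht => ?_).symm⟩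
  have hpre : (fun p : (∀ i, E i) × (∀ i, E i) => s.piecewise p.2 p.1) ⁻¹' Set.univ.pi t =
      Set.univ.pi (fun i => if i ∈ s then Set.univ else t i) ×ˢ
        Set.univ.pi (fun i => if i ∈ s then t i else Set.univ) := by
    ext p
    simp only [Set.mem_preimage, Set.mem_pi, Set.mem_univ, true_implies, Set.mem_prod,
      ← forall_and]
    refine forall_congr' fun i => ?_
    by_cases hi : i ∈ s <;> simp [hi]
  rw [Measure.map_apply hmeas (.univ_pi ht), hpre, Measure.prod_prod, Measure.pi_pi,
    Measure.pi_pi, ← Finset.prod_mul_distrib]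
  refine Finset.prod_congr rfl fun i _ => ?_
  by_cases hi : i ∈ s <;> simp [hi]

noncomputable def marginalIntegral (s : Set ι) (h : (∀ i, E i) → ℝ) (x : ∀ i, E i) : ℝ :=
  ∫ y, h (s.piecewise y x) ∂Measure.pi μ

noncomputable def resampleCorr (s : Set ι) (h : (∀ i, E i) → ℝ) : ℝ :=
  ∫ p, resampleProd s h p ∂(Measure.pi μ).prod (Measure.pi μ)

variable {μ} {h : (∀ i, E i) → ℝ}

theorem integrable_resampleProd (hh : MemLp h 2 (Measure.pi μ)) (s : Set ι) :
    Integrable (resampleProd s h) ((Measure.pi μ).prod (Measure.pi μ)) :=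
  (hh.comp_measurePreserving measurePreserving_fst).integrable_mul
    (hh.comp_measurePreserving (measurePreserving_piecewise μ s))

theorem measurePreserving_piecewise_prodMap (s : Set ι) :
    MeasurePreserving
      (fun q : ((∀ i, E i) × (∀ i, E i)) × (∀ i, E i) × (∀ i, E i) =>
        (s.piecewise q.2.1 q.1.1, s.piecewise q.2.2 q.1.2))
      (((Measure.pi μ).prod (Measure.pi μ)).prod ((Measure.pi μ).prod (Measure.pi μ)))
      ((Measure.pi μ).prod (Measure.pi μ)) :=
  ((measurePreserving_piecewise μ s).prod (measurePreserving_piecewise μ s)).comp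
    (measurePreserving_prodProdProdComm _ _ _ _)

theorem resampleProd_marginalIntegral (s t : Set ι) (p : (∀ i, E i) × (∀ i, E i)) :
    resampleProd t (marginalIntegral μ s h) p =
      ∫ q, resampleProd (s ∪ t) h (s.piecewise q.1 p.1, s.piecewise q.2 p.2)
        ∂(Measure.pi μ).prod (Measure.pi μ) := by
  rw [resampleProd, marginalIntegral, marginalIntegral, ← integral_prod_mul]
  congr 1 with q
  rw [resampleProd]
  congr 2
  ext i
  by_cases hs : i ∈ s <;> by_cases ht : i ∈ t <;> simp [Set.piecewise, hs, ht]

theorem integrable_resampleProd_marginalIntegral (hh : MemLp h 2 (Measure.pi μ))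
    (s t : Set ι) :
    Integrable (resampleProd t (marginalIntegral μ s h))
      ((Measure.pi μ).prod (Measure.pi μ)) := by
  simp_rw [funext (resampleProd_marginalIntegral (μ := μ) (h := h) s t)]
  exact ((measurePreserving_piecewise_prodMap s).integrable_comp_of_integrable
    (integrable_resampleProd hh (s ∪ t))).integral_prod_left

theorem resampleCorr_marginalIntegral (hh : MemLp h 2 (Measure.pi μ)) (s t : Set ι) :
    resampleCorr μ t (marginalIntegral μ s h) = resampleCorr μ (s ∪ t) h := by
  have hΘ := measurePreserving_piecewise_prodMap (μ := μ) s
  have hG := integrable_resampleProd hh (s ∪ t)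
  simp_rw [resampleCorr, resampleProd_marginalIntegral]
  exact (integral_prod _ (hΘ.integrable_comp_of_integrable hG)).symm.trans
    (hΘ.integral_comp_of_aestronglyMeasurable hG.aestronglyMeasurable)

theorem memLp_marginalIntegral (hh : MemLp h 2 (Measure.pi μ)) (s : Set ι) :
    MemLp (marginalIntegral μ s h) 2 (Measure.pi μ) := by
  have hsm : AEStronglyMeasurable (marginalIntegral μ s h) (Measure.pi μ) :=
    (hh.1.comp_measurePreserving (measurePreserving_piecewise μ s)).integral_prod_right'
  refine (memLp_two_iff_integrable_sq hsm).2 ?_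
  have := integrable_resampleProd_marginalIntegral hh s ∅
  rw [resampleProd_empty] at this
  exact (Integrable.comp_fst_iff (NeZero.ne _)).1 this

theorem resampleCorr_empty (v : (∀ i, E i) → ℝ) :
    resampleCorr μ ∅ v = ∫ x, v x ^ 2 ∂Measure.pi μ := by
  simp [resampleCorr, resampleProd_empty, integral_fun_fst (fun x => v x ^ 2)]

theorem resampleCorr_le_integral_sq {v : (∀ i, E i) → ℝ} (hv : MemLp v 2 (Measure.pi μ))
    (t : Set ι) : resampleCorr μ t v ≤ ∫ x, v x ^ 2 ∂Measure.pi μ := by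
  have hpw := measurePreserving_piecewise μ t
  have hsq : Integrable (fun x => v x ^ 2) (Measure.pi μ) := hv.integrable_sq
  have h1 := hsq.comp_fst (Measure.pi μ)
  have h2 : Integrable (fun p => v (t.piecewise p.2 p.1) ^ 2)
      ((Measure.pi μ).prod (Measure.pi μ)) :=
    hpw.integrable_comp_of_integrable hsq
  calc resampleCorr μ t v
      ≤ ∫ p, (v p.1 ^ 2 + v (t.piecewise p.2 p.1) ^ 2) / 2
          ∂(Measure.pi μ).prod (Measure.pi μ) :=
        integral_mono (integrable_resampleProd hv t) ((h1.add h2).div_const 2) fun p => by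
          rw [resampleProd]
          nlinarith [sq_nonneg (v p.1 - v (t.piecewise p.2 p.1))]
    _ = ∫ x, v x ^ 2 ∂Measure.pi μ := by
        rw [integral_div, integral_add h1 h2, integral_fun_fst (fun x => v x ^ 2),
          hpw.integral_comp_of_aestronglyMeasurable hsq.aestronglyMeasurable]
        simp

theorem resampleCorr_eq_integral_sq (hh : MemLp h 2 (Measure.pi μ)) (s : Set ι) :
    resampleCorr μ s h = ∫ x, marginalIntegral μ s h x ^ 2 ∂Measure.pi μ := by
  rw [← resampleCorr_empty, resampleCorr_marginalIntegral hh, Set.union_empty]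

theorem resampleCorr_nonneg (hh : MemLp h 2 (Measure.pi μ)) (s : Set ι) :
    0 ≤ resampleCorr μ s h :=
  resampleCorr_eq_integral_sq hh s ▸ integral_nonneg fun _ => sq_nonneg _

theorem resampleCorr_anti (hh : MemLp h 2 (Measure.pi μ)) {s t : Set ι} (hst : s ⊆ t) :
    resampleCorr μ t h ≤ resampleCorr μ s h :=
  calc resampleCorr μ t h = resampleCorr μ t (marginalIntegral μ s h) := by
        rw [resampleCorr_marginalIntegral hh, Set.union_eq_right.2 hst]
    _ ≤ ∫ x, marginalIntegral μ s h x ^ 2 ∂Measure.pi μ :=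
        resampleCorr_le_integral_sq (memLp_marginalIntegral hh s) t
    _ = resampleCorr μ s h := (resampleCorr_eq_integral_sq hh s).symm

end Resampling

section TwoCopies

open scoped Classical

variable {ι α : Type*}

/-- The coordinate-space version of `resample`: `y ∘ Sum.inl` and `y ∘ Sum.inr` are the two
copies. -/
noncomputable def mixCopies (S : Set ι) (y : ι ⊕ ι → α) : ι → α :=
  S.piecewise (fun l => y (.inr l)) (fun l => y (.inl l))

noncomputable def mixDiff (f : (ι → α) → ℝ) (S T : Set ι) (y : ι ⊕ ι → α) : ℝ :=
  f (mixCopies S y) - f (mixCopies T y)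

theorem mixCopies_empty (y : ι ⊕ ι → α) : mixCopies ∅ y = fun l => y (.inl l) := by
  rw [mixCopies, Set.piecewise_empty]

theorem measurable_mixCopies [MeasurableSpace α] (S : Set ι) :
    Measurable (mixCopies (α := α) S) :=
  measurable_pi_lambda _ fun l => by
    by_cases hl : l ∈ S
    · simp only [mixCopies, Set.piecewise, hl, if_true]; fun_prop
    · simp only [mixCopies, Set.piecewise, hl, if_false]; fun_prop

theorem measurable_mixDiff [MeasurableSpace α] {f : (ι → α) → ℝ} (hf : Measurable f)
    (S T : Set ι) : Measurable (mixDiff f S T) :=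
  (hf.comp (measurable_mixCopies _)).sub (hf.comp (measurable_mixCopies _))

theorem mixCopies_piecewise_inr {S B : Set ι} (hSB : Disjoint S B) (y y' : ι ⊕ ι → α) :
    mixCopies S ((Sum.inr '' B).piecewise y' y) = mixCopies S y := by
  ext l
  by_cases hS : l ∈ S
  · have hB : l ∉ B := hSB.notMem_of_mem_left hS
    simp [mixCopies, Set.piecewise, hS, hB]
  · simp [mixCopies, Set.piecewise, hS]

theorem mixCopies_union_piecewise_inr {S B : Set ι} (hSB : Disjoint S B)
    (y y' : ι ⊕ ι → α) :
    mixCopies (B ∪ S) ((Sum.inr '' B).piecewise (y' ∘ Sum.swap) y) =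
      mixCopies S ((Sum.inl '' B).piecewise y' y) := by
  ext l
  by_cases hB : l ∈ B
  · have hS : l ∉ S := hSB.notMem_of_mem_right hB
    simp [mixCopies, Set.piecewise, hS, hB]
  · by_cases hS : l ∈ S <;> simp [mixCopies, Set.piecewise, hS, hB]

theorem integral_mixDiff_mul_eq_resampleCorr [Fintype ι] [MeasurableSpace α]
    {ν : ι ⊕ ι → Measure α} [∀ s, IsProbabilityMeasure (ν s)]
    (hν : ∀ l, ν (.inr l) = ν (.inl l)) {f : (ι → α) → ℝ} (hf : Measurable f) {k : ι}
    {B : Set ι} (hkB : k ∉ B) :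
    ∫ y, mixDiff f ∅ {k} y * mixDiff f B (B ∪ {k}) y ∂Measure.pi ν =
      resampleCorr ν (Sum.inl '' B) (mixDiff f ∅ {k}) := by
  have hswap : MeasurePreserving (fun y : ι ⊕ ι → α => y ∘ Sum.swap)
      (Measure.pi ν) (Measure.pi ν) :=
    measurePreserving_comp_equiv ν (Equiv.sumComm ι ι) (by rintro (l | l) <;> simp [hν])
  -- `Ψ` moves the `B`-coordinates of a fresh copy into the `Sum.inr`-slots over `B`, which
  -- `mixDiff f ∅ {k}` ignores.
  have hΨ := (measurePreserving_piecewise ν (Sum.inr '' B)).comp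
    ((MeasurePreserving.id (Measure.pi ν)).prod hswap)
  have hk : Disjoint {k} B := Set.disjoint_singleton_left.2 hkB
  have hF : Measurable fun y => mixDiff f ∅ {k} y * mixDiff f B (B ∪ {k}) y :=
    (measurable_mixDiff hf ∅ {k}).mul (measurable_mixDiff hf B (B ∪ {k}))
  rw [← hΨ.integral_comp_of_aestronglyMeasurable hF.aestronglyMeasurable, resampleCorr]
  congr 1 with p
  have h0 := mixCopies_union_piecewise_inr (Set.empty_disjoint B) p.1 p.2
  rw [Set.union_empty] at h0
  simp only [Function.comp_apply, Prod.map, id, resampleProd, mixDiff, h0,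
    mixCopies_piecewise_inr (Set.empty_disjoint B), mixCopies_piecewise_inr hk,
    mixCopies_union_piecewise_inr hk]

theorem mixCopies_singleton (k : ι) (y : ι ⊕ ι → α) :
    mixCopies {k} y = mixCopies ∅ (y ∘ Equiv.swap (.inl k) (.inr k)) := by
  ext l
  by_cases hl : l = k <;> simp [mixCopies, Set.piecewise, Equiv.swap_apply_def, hl]

theorem memLp_mixDiff_singleton [Fintype ι] [MeasurableSpace α] {ν : ι ⊕ ι → Measure α}
    [∀ s, IsProbabilityMeasure (ν s)] (hν : ∀ l, ν (.inr l) = ν (.inl l))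
    {f : (ι → α) → ℝ} (hf : MemLp (fun y => f (mixCopies ∅ y)) 2 (Measure.pi ν))
    (k : ι) :
    MemLp (mixDiff f ∅ {k}) 2 (Measure.pi ν) := by
  have hτ := measurePreserving_comp_equiv ν (Equiv.swap (.inl k) (.inr k)) fun s => by
    rw [Equiv.swap_apply_def]
    split_ifs <;> simp_all
  refine hf.sub ?_
  simpa only [mixCopies_singleton, Function.comp_def] using hf.comp_measurePreserving hτ

end TwoCopies

section IndependentCopies

variable {Ω 𝒳 : Type*} [MeasurableSpace Ω] [MeasurableSpace 𝒳] {P : Measure Ω} {n : ℕ}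
  {X X' : Fin n → Ω → 𝒳}

theorem map_sumElim_eq_pi (hY : ∀ s, Measurable (Sum.elim X X' s))
    (hindep : iIndepFun (Sum.elim X X' : Fin n ⊕ Fin n → Ω → 𝒳) P) :
    P.map (fun ω s => Sum.elim X X' s ω) = Measure.pi fun s => P.map (Sum.elim X X' s) :=
  hindep.map_fun_eq_pi_map fun s => (hY s).aemeasurable

variable [IsProbabilityMeasure P] {f : (Fin n → 𝒳) → ℝ}

theorem integral_resample_mul_eq_resampleCorr (hY : ∀ s, Measurable (Sum.elim X X' s))
    (hindep : iIndepFun (Sum.elim X X' : Fin n ⊕ Fin n → Ω → 𝒳) P)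
    (hid : ∀ i, IdentDistrib (X' i) (X i) P P) (hf : Measurable f) {k : Fin n}
    {B : Set (Fin n)} (hkB : k ∉ B) :
    ∫ ω, (f (fun l => X l ω) - f (resample X X' {k} ω)) *
        (f (resample X X' B ω) - f (resample X X' (B ∪ {k}) ω)) ∂P =
      resampleCorr (fun s => P.map (Sum.elim X X' s)) (Sum.inl '' B) (mixDiff f ∅ {k}) := by
  have := fun s => Measure.isProbabilityMeasure_map (μ := P) (hY s).aemeasurable
  have hF : Measurable fun y => mixDiff f ∅ {k} y * mixDiff f B (B ∪ {k}) y :=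
    (measurable_mixDiff hf ∅ {k}).mul (measurable_mixDiff hf B (B ∪ {k}))
  rw [← integral_mixDiff_mul_eq_resampleCorr (fun l => (hid l).map_eq) hf hkB,
    ← map_sumElim_eq_pi hY hindep,
    integral_map (measurable_pi_lambda _ hY).aemeasurable hF.aestronglyMeasurable]
  simp only [mixDiff, mixCopies_empty]
  rfl

theorem memLp_mixDiff_pi_map (hY : ∀ s, Measurable (Sum.elim X X' s))
    (hindep : iIndepFun (Sum.elim X X' : Fin n ⊕ Fin n → Ω → 𝒳) P)
    (hid : ∀ i, IdentDistrib (X' i) (X i) P P) (hf : Measurable f)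
    (hL2 : MemLp (fun ω => f (fun i => X i ω)) 2 P) (k : Fin n) :
    MemLp (mixDiff f ∅ {k}) 2 (Measure.pi fun s => P.map (Sum.elim X X' s)) := by
  have := fun s => Measure.isProbabilityMeasure_map (μ := P) (hY s).aemeasurable
  refine memLp_mixDiff_singleton (fun l => (hid l).map_eq) ?_ k
  rw [← map_sumElim_eq_pi hY hindep]
  refine (memLp_map_measure_iff (g := fun y => f (mixCopies ∅ y))
    (hf.comp (measurable_mixCopies _)).aestronglyMeasurable
    (measurable_pi_lambda _ hY).aemeasurable).2 ?_
  simpa only [Function.comp_def, mixCopies_empty, Sum.elim_inl] using hL2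

end IndependentCopies

/-- Here `i` is 0-based: `σ '' {l | l < i}` and `σ '' {l | l ≤ i}` are the paper's
`σ([i−1])` and `σ([i])`. -/
theorem Aterm_monotone_general
    {Ω : Type*} [MeasurableSpace Ω] (P : Measure Ω) [IsProbabilityMeasure P]
    {𝒳 : Type*} [MeasurableSpace 𝒳] (n : ℕ)
    (X X' : Fin n → Ω → 𝒳)
    (hmeas : ∀ i, Measurable (X i)) (hmeas' : ∀ i, Measurable (X' i))
    (hindep : iIndepFun (Sum.elim X X' : Fin n ⊕ Fin n → Ω → 𝒳) P)
    (hid : ∀ i, IdentDistrib (X' i) (X i) P P)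
    (f : (Fin n → 𝒳) → ℝ) (hf : Measurable f)
    (hL2 : MemLp (fun ω => f (fun i => X i ω)) 2 P)
    (σ : Equiv.Perm (Fin n)) (i : Fin n)
    (j : Fin n) (hj : j ∉ σ '' {l | l ≤ i}) :
    (∫ ω, (f (fun l => X l ω) - f (resample X X' {σ i} ω)) *
        (f (resample X X' (σ '' {l | l < i} ∪ {j}) ω) -
          f (resample X X' (σ '' {l | l ≤ i} ∪ {j}) ω)) ∂P
      ≤ ∫ ω, (f (fun l => X l ω) - f (resample X X' {σ i} ω)) *
          (f (resample X X' (σ '' {l | l < i}) ω) -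
            f (resample X X' (σ '' {l | l ≤ i}) ω)) ∂P) ∧
    0 ≤ ∫ ω, (f (fun l => X l ω) - f (resample X X' {σ i} ω)) *
        (f (resample X X' (σ '' {l | l < i} ∪ {j}) ω) -
          f (resample X X' (σ '' {l | l ≤ i} ∪ {j}) ω)) ∂P := by
  set A := σ '' {l | l < i}
  have hle : σ '' {l | l ≤ i} = A ∪ {σ i} := by
    rw [← Set.image_singleton, ← Set.image_union]
    congr 1
    ext l
    simp [le_iff_lt_or_eq, or_comm]
  have hkA : σ i ∉ A := by simp [A]
  rw [hle] at hj ⊢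
  have hkAj : σ i ∉ A ∪ {j} := by
    rintro (h | h)
    exacts [hkA h, hj (Or.inr h.symm)]
  have hY : ∀ s, Measurable (Sum.elim X X' s) := by
    rintro (l | l)
    exacts [hmeas l, hmeas' l]
  have := fun s => Measure.isProbabilityMeasure_map (μ := P) (hY s).aemeasurable
  have hD := memLp_mixDiff_pi_map hY hindep hid hf hL2 (σ i)
  rw [Set.union_right_comm, integral_resample_mul_eq_resampleCorr hY hindep hid hf hkA,
    integral_resample_mul_eq_resampleCorr hY hindep hid hf hkAj]
  exact ⟨resampleCorr_anti hD (Set.image_mono Set.subset_union_left), resampleCorr_nonneg hD _⟩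

/-- Lemma 4.1 of the paper: for a fixed permutation `σ`, `i ∈ [n−1]` and `j ∉ σ([i])`,
`A_i = E[(f(X) − f(X^{(σ(i))})) (f(X^{σ([i−1])}) − f(X^{σ([i])}))]` dominates the analogous
quantity in which `j` is added to both resampled index sets, and the latter is nonnegative.
Here `i : Fin n` is the 0-based version of the 1-based index `i+1`, so `i ∈ [n-1]`
becomes `(i : ℕ) + 1 < n`. -/
theorem Aterm_monotone
    {Ω : Type*} [MeasurableSpace Ω] (P : Measure Ω) [IsProbabilityMeasure P]
    {𝒳 : Type*} [MeasurableSpace 𝒳] (n : ℕ)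
    (X X' : Fin n → Ω → 𝒳)
    (hmeas : ∀ i, Measurable (X i)) (hmeas' : ∀ i, Measurable (X' i))
    (hindep : iIndepFun (Sum.elim X X' : Fin n ⊕ Fin n → Ω → 𝒳) P)
    (hid : ∀ i, IdentDistrib (X' i) (X i) P P)
    (f : (Fin n → 𝒳) → ℝ) (hf : Measurable f)
    (hL2 : MemLp (fun ω => f (fun i => X i ω)) 2 P)
    (σ : Equiv.Perm (Fin n)) (i : Fin n) (hi : (i : ℕ) + 1 < n)
    (j : Fin n) (hj : j ∉ σ '' {l | l ≤ i}) :
    (∫ ω, (f (fun l => X l ω) - f (resample X X' {σ i} ω)) *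
        (f (resample X X' (σ '' {l | l < i} ∪ {j}) ω) -
          f (resample X X' (σ '' {l | l ≤ i} ∪ {j}) ω)) ∂P
      ≤ ∫ ω, (f (fun l => X l ω) - f (resample X X' {σ i} ω)) *
          (f (resample X X' (σ '' {l | l < i}) ω) -
            f (resample X X' (σ '' {l | l ≤ i}) ω)) ∂P) ∧
    0 ≤ ∫ ω, (f (fun l => X l ω) - f (resample X X' {σ i} ω)) *
        (f (resample X X' (σ '' {l | l < i} ∪ {j}) ω) -
          f (resample X X' (σ '' {l | l ≤ i} ∪ {j}) ω)) ∂P :=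
  Aterm_monotone_general P n X X' hmeas hmeas' hindep hid f hf hL2 σ i j hj
end

section
/- Let X₁,…,Xₙ be independent random variables taking values in a set 𝒳, let f : 𝒳ⁿ → ℝ be measurable with f(X) square-integrable, and let A ⊆ {1,…,n} be a subset with 1 ∉ A. Then E[f(X) f(X^A)] ≥ E[f(X^{(1)}) f(X^A)]. -/
/-!
Average out the coordinates in `A`: with `W` the coordinates of `X` off `A` and
`H w = E[f(w, X_A)]`, independence turns `E[f(X) f(X^A)]` into `E[H(W)²]` and
`E[f(X^{(1)}) f(X^A)]` into `E[H(W') H(W)]`, where `W'` is `W` with its first coordinate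
resampled (this uses `1 ∉ A`). Since `W'` and `W` have the same law,
`2 H(W') H(W) ≤ H(W')² + H(W)²` integrates to the claim.
-/

open MeasureTheory ProbabilityTheory

section Jensen

variable {α β : Type*} [MeasurableSpace α] [MeasurableSpace β] {μ : Measure α} {ν : Measure β}

lemma sq_integral_le_integral_sq [IsProbabilityMeasure μ] {g : α → ℝ} (hg : MemLp g 2 μ) :
    (∫ x, g x ∂μ) ^ 2 ≤ ∫ x, g x ^ 2 ∂μ := by
  have h := variance_nonneg g μ
  rw [variance_eq_sub hg] at h
  simp only [Pi.pow_apply] at h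
  linarith

lemma MeasureTheory.MemLp.integral_prod_left_two [SFinite μ] [IsProbabilityMeasure ν]
    {F : α × β → ℝ} (hF : MemLp F 2 (μ.prod ν)) : MemLp (fun x => ∫ y, F (x, y) ∂ν) 2 μ := by
  have hmeas := hF.aestronglyMeasurable.integral_prod_right'
  have hsq : Integrable (fun z => F z ^ 2) (μ.prod ν) := hF.integrable_sq
  refine (memLp_two_iff_integrable_sq hmeas).mpr (hsq.integral_prod_left.mono' (hmeas.pow 2) ?_)
  filter_upwards [hsq.prod_right_ae, hF.aestronglyMeasurable.prodMk_left] with x hx hxm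
  rw [Real.norm_eq_abs, abs_of_nonneg (sq_nonneg _)]
  exact sq_integral_le_integral_sq ((memLp_two_iff_integrable_sq hxm).mpr hx)

end Jensen

section Independence

variable {Ω : Type*} [MeasurableSpace Ω] {P : Measure Ω}

lemma ProbabilityTheory.iIndepFun.indepFun_subtype_compl {ι : Type*} [Fintype ι] {β : ι → Type*}
    [∀ i, MeasurableSpace (β i)] {Z : ∀ i, Ω → β i} (h : iIndepFun Z P)
    (hZ : ∀ i, Measurable (Z i)) (p : ι → Prop) [DecidablePred p] :
    IndepFun (fun ω (i : {i // p i}) => Z i ω) (fun ω (i : {i // ¬ p i}) => Z i ω) P :=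
  IndepFun.comp (φ := fun (v : ∀ j : ({i | p i} : Finset ι), β j) (i : {i // p i}) =>
      v ⟨i, Finset.mem_filter.mpr ⟨Finset.mem_univ _, i.2⟩⟩)
    (ψ := fun (v : ∀ j : ({i | ¬ p i} : Finset ι), β j) (i : {i // ¬ p i}) =>
      v ⟨i, Finset.mem_filter.mpr ⟨Finset.mem_univ _, i.2⟩⟩)
    (h.indepFun_finset {i | p i} {i | ¬ p i} (Finset.disjoint_filter_filter_not _ _ _) hZ)
    (by fun_prop) (by fun_prop)

end Independence

section Resampling

variable {Ω 𝒲 𝒜 : Type*} [MeasurableSpace Ω] [MeasurableSpace 𝒲] [MeasurableSpace 𝒜]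
  {P : Measure Ω} [IsProbabilityMeasure P] {F : 𝒲 × 𝒜 → ℝ}

lemma integral_mul_eq_integral_mul_of_indepFun {W₁ W₂ : Ω → 𝒲} {U U' : Ω → 𝒜}
    (hW₁ : Measurable W₁) (hW₂ : Measurable W₂) (hU : Measurable U) (hU' : Measurable U')
    (hWU : IndepFun (fun ω => (W₁ ω, W₂ ω)) (fun ω => (U ω, U' ω)) P)
    (hUU' : IndepFun U U' P) (hU'U : IdentDistrib U' U P P) (hF : Measurable F)
    (hF₁ : MemLp (fun ω => F (W₁ ω, U ω)) 2 P) (hF₂ : MemLp (fun ω => F (W₂ ω, U' ω)) 2 P) :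
    ∫ ω, F (W₁ ω, U ω) * F (W₂ ω, U' ω) ∂P
      = ∫ ω, (∫ a, F (W₁ ω, a) ∂(P.map U)) * (∫ a, F (W₂ ω, a) ∂(P.map U)) ∂P := by
  set α := P.map U
  set W := fun ω => (W₁ ω, W₂ ω)
  set V := fun ω => (W ω, (U ω, U' ω))
  set g : (𝒲 × 𝒲) × (𝒜 × 𝒜) → ℝ := fun q => F (q.1.1, q.2.1) * F (q.1.2, q.2.2)
  have hV : Measurable V := by fun_prop
  have hg : Measurable g := by fun_prop
  have hlaw : P.map V = (P.map W).prod (α.prod α) := by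
    rw [hWU.map_prod_eq_prod_map_map (by fun_prop) (by fun_prop),
      hUU'.map_prod_eq_prod_map_map hU.aemeasurable hU'.aemeasurable, hU'U.map_eq]
  have hgV : Integrable g (P.map V) :=
    (integrable_map_measure hg.aestronglyMeasurable hV.aemeasurable).mpr (hF₁.integrable_mul hF₂)
  rw [hlaw] at hgV
  have hH : Measurable fun w => ∫ a, F (w, a) ∂α :=
    (hF.stronglyMeasurable.integral_prod_right' (ν := α)).measurable
  calc ∫ ω, g (V ω) ∂P = ∫ q, g q ∂(P.map V) :=
        (integral_map hV.aemeasurable hg.aestronglyMeasurable).symm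
    _ = ∫ w, ∫ a, g (w, a) ∂(α.prod α) ∂(P.map W) := by rw [hlaw, integral_prod g hgV]
    _ = ∫ w, (∫ a, F (w.1, a) ∂α) * (∫ a, F (w.2, a) ∂α) ∂(P.map W) := by
        congr with w
        exact integral_prod_mul (fun a => F (w.1, a)) (fun a => F (w.2, a))
    _ = _ := integral_map (by fun_prop)
        ((hH.comp measurable_fst).mul (hH.comp measurable_snd)).aestronglyMeasurable

theorem integral_resampled_mul_le {W W' : Ω → 𝒲} {U U' : Ω → 𝒜}
    (hW : Measurable W) (hW' : Measurable W') (hU : Measurable U) (hU' : Measurable U')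
    (hWU : IndepFun (fun ω => (W' ω, W ω)) (fun ω => (U ω, U' ω)) P)
    (hUU' : IndepFun U U' P) (hW'W : IdentDistrib W' W P P) (hU'U : IdentDistrib U' U P P)
    (hF : Measurable F) (hL2 : MemLp (fun ω => F (W ω, U ω)) 2 P) :
    ∫ ω, F (W' ω, U ω) * F (W ω, U' ω) ∂P ≤ ∫ ω, F (W ω, U ω) * F (W ω, U' ω) ∂P := by
  set H := fun w => ∫ a, F (w, a) ∂(P.map U)
  have hH : Measurable H := (hF.stronglyMeasurable.integral_prod_right' (ν := P.map U)).measurable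
  have hW_U : IndepFun W U P := hWU.comp measurable_snd measurable_fst
  have hWWU : IndepFun (fun ω => (W ω, W ω)) (fun ω => (U ω, U' ω)) P :=
    hWU.comp (measurable_snd.prodMk measurable_snd) measurable_id
  have hF₁ : MemLp (fun ω => F (W' ω, U ω)) 2 P :=
    ((hW'W.prodMk (.refl hU.aemeasurable) (hWU.comp measurable_fst measurable_fst)
      hW_U).comp hF).memLp_iff.mpr hL2
  have hF₂ : MemLp (fun ω => F (W ω, U' ω)) 2 P :=
    (((IdentDistrib.refl hW.aemeasurable).prodMk hU'U
      (hWU.comp measurable_snd measurable_snd) hW_U).comp hF).memLp_iff.mpr hL2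
  have hHW : MemLp (fun ω => H (W ω)) 2 P := by
    have : IsProbabilityMeasure (P.map U) := Measure.isProbabilityMeasure_map hU.aemeasurable
    have hFlaw : MemLp F 2 ((P.map W).prod (P.map U)) := by
      rw [← hW_U.map_prod_eq_prod_map_map hW.aemeasurable hU.aemeasurable]
      exact (memLp_map_measure_iff hF.aestronglyMeasurable (by fun_prop)).mpr hL2
    exact (memLp_map_measure_iff hH.aestronglyMeasurable hW.aemeasurable).mp
      hFlaw.integral_prod_left_two
  have hHW' : MemLp (fun ω => H (W' ω)) 2 P := (hW'W.comp hH).memLp_iff.mpr hHW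
  calc ∫ ω, F (W' ω, U ω) * F (W ω, U' ω) ∂P = ∫ ω, H (W' ω) * H (W ω) ∂P :=
        integral_mul_eq_integral_mul_of_indepFun hW' hW hU hU' hWU hUU' hU'U hF hF₁ hF₂
    _ ≤ ∫ ω, (H (W' ω) ^ 2 + H (W ω) ^ 2) / 2 ∂P :=
        integral_mono (hHW'.integrable_mul hHW)
          ((hHW'.integrable_sq.add hHW.integrable_sq).div_const 2)
          fun ω => by nlinarith [two_mul_le_add_sq (H (W' ω)) (H (W ω))]
    _ = ∫ ω, H (W ω) * H (W ω) ∂P := by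
        have hsq : ∫ ω, H (W' ω) ^ 2 ∂P = ∫ ω, H (W ω) ^ 2 ∂P := (hW'W.comp hH).sq.integral_eq
        rw [integral_div, integral_add hHW'.integrable_sq hHW.integrable_sq, hsq]
        simp only [sq]
        ring
    _ = ∫ ω, F (W ω, U ω) * F (W ω, U' ω) ∂P :=
        (integral_mul_eq_integral_mul_of_indepFun hW hW hU hU' hWWU hUU' hU'U hF hL2
          hF₂).symm

end Resampling

section ThreeCopies

variable {Ω ι 𝒳 : Type*} [MeasurableSpace Ω] [MeasurableSpace 𝒳] {P : Measure Ω} [Fintype ι]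
  {X X' X'' : ι → Ω → 𝒳} {A : Set ι}

lemma indepFun_restrict_update_restrict [DecidableEq ι]
    (hY : ∀ j, Measurable (Sum.elim X (Sum.elim X' X'') j))
    (hindep : iIndepFun (Sum.elim X (Sum.elim X' X'')) P) (i₀ : ι) :
    IndepFun (fun ω => ((fun i : ↥Aᶜ => if (i : ι) = i₀ then X'' i ω else X i ω),
        fun i : ↥Aᶜ => X i ω))
      (fun ω => ((fun i : A => X i ω), fun i : A => X' i ω)) P := by
  classical
  let p : ι ⊕ (ι ⊕ ι) → Prop := Sum.elim (· ∈ A) (Sum.elim (· ∈ A) fun _ => False)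
  exact (hindep.indepFun_subtype_compl hY p).symm.comp
    (φ := fun (v : {j // ¬ p j} → 𝒳) =>
      (fun i : ↥Aᶜ => if (i : ι) = i₀ then v ⟨.inr (.inr i), not_false⟩ else v ⟨.inl i, i.2⟩,
        fun i : ↥Aᶜ => v ⟨.inl i, i.2⟩))
    (ψ := fun (v : {j // p j} → 𝒳) =>
      (fun i : A => v ⟨.inl i, i.2⟩, fun i : A => v ⟨.inr (.inl i), i.2⟩))
    ((measurable_pi_lambda _ fun i => by split_ifs <;> fun_prop).prodMk (by fun_prop))
    (by fun_prop)

lemma indepFun_restrict_restrict (hY : ∀ j, Measurable (Sum.elim X (Sum.elim X' X'') j))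
    (hindep : iIndepFun (Sum.elim X (Sum.elim X' X'')) P) :
    IndepFun (fun ω (i : A) => X i ω) (fun ω (i : A) => X' i ω) P := by
  classical
  let p : ι ⊕ (ι ⊕ ι) → Prop := Sum.elim (· ∈ A) fun _ => False
  exact (hindep.indepFun_subtype_compl hY p).comp
    (φ := fun (v : {j // p j} → 𝒳) (i : A) => v ⟨.inl i, i.2⟩)
    (ψ := fun (v : {j // ¬ p j} → 𝒳) (i : A) => v ⟨.inr (.inl i), not_false⟩)
    (by fun_prop) (by fun_prop)

lemma identDistrib_restrict_update_restrict [DecidableEq ι] (hX : ∀ i, Measurable (X i))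
    (hindep : iIndepFun (Sum.elim X (Sum.elim X' X'')) P)
    (hid'' : ∀ i, IdentDistrib (X'' i) (X i) P P) (i₀ : ι) :
    IdentDistrib (fun ω (i : ↥Aᶜ) => if (i : ι) = i₀ then X'' i ω else X i ω)
      (fun ω (i : ↥Aᶜ) => X i ω) P P := by
  let e : ↥Aᶜ → ι ⊕ (ι ⊕ ι) := fun i => if (i : ι) = i₀ then .inr (.inr i) else .inl i
  have he : e.Injective := fun i j h => Subtype.ext <| by
    simp only [e] at h
    split_ifs at h <;> simp_all
  have hYe : (fun ω i => Sum.elim X (Sum.elim X' X'') (e i) ω)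
      = fun ω (i : ↥Aᶜ) => if (i : ι) = i₀ then X'' i ω else X i ω := by
    funext ω i
    simp only [e]
    split_ifs <;> rfl
  rw [← hYe]
  refine IdentDistrib.pi (fun i => ?_) (hindep.precomp he)
    (hindep.precomp (Sum.inl_injective.comp Subtype.val_injective))
  simp only [e]
  split_ifs
  exacts [hid'' i, .refl (hX i).aemeasurable]

lemma identDistrib_restrict_restrict (hindep : iIndepFun (Sum.elim X (Sum.elim X' X'')) P)
    (hid' : ∀ i, IdentDistrib (X' i) (X i) P P) :
    IdentDistrib (fun ω (i : A) => X' i ω) (fun ω (i : A) => X i ω) P P :=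
  IdentDistrib.pi (fun i => hid' i)
    (hindep.precomp ((Sum.inr_injective.comp Sum.inl_injective).comp Subtype.val_injective))
    (hindep.precomp (Sum.inl_injective.comp Subtype.val_injective))

end ThreeCopies

/-- The paper's first coordinate (index 1) is `⟨0, hn⟩ : Fin n`. -/
theorem resample_first_decreases_correlation
    {Ω : Type*} [MeasurableSpace Ω] (P : Measure Ω) [IsProbabilityMeasure P]
    {𝒳 : Type*} [MeasurableSpace 𝒳] (n : ℕ) (hn : 0 < n)
    (X X' X'' : Fin n → Ω → 𝒳)
    (hmeas : ∀ i, Measurable (X i)) (hmeas' : ∀ i, Measurable (X' i))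
    (hmeas'' : ∀ i, Measurable (X'' i))
    (hindep : iIndepFun
      (Sum.elim X (Sum.elim X' X'') : Fin n ⊕ (Fin n ⊕ Fin n) → Ω → 𝒳) P)
    (hid : ∀ i, IdentDistrib (X' i) (X i) P P)
    (hid' : ∀ i, IdentDistrib (X'' i) (X i) P P)
    (f : (Fin n → 𝒳) → ℝ) (hf : Measurable f)
    (hL2 : MemLp (fun ω => f (fun i => X i ω)) 2 P)
    (A : Set (Fin n)) (hA : (⟨0, hn⟩ : Fin n) ∉ A) :
    ∫ ω, f (fun i => if i = ⟨0, hn⟩ then X'' i ω else X i ω) * f (resample X X' A ω) ∂P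
      ≤ ∫ ω, f (fun i => X i ω) * f (resample X X' A ω) ∂P := by
  classical
  set z : Fin n := ⟨0, hn⟩
  have hY : ∀ j, Measurable (Sum.elim X (Sum.elim X' X'') j) := by
    rintro (i | i | i)
    exacts [hmeas i, hmeas' i, hmeas'' i]
  -- `F (w, a)` is `f` at the point that agrees with `a` on `A` and with `w` off `A`.
  let F : (↥Aᶜ → 𝒳) × (A → 𝒳) → ℝ := fun q =>
    f ((MeasurableEquiv.piEquivPiSubtypeProd (fun _ => 𝒳) (· ∈ A)).symm (q.2, q.1))
  have hF : Measurable F := hf.comp ((MeasurableEquiv.measurable _).comp measurable_swap)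
  have hX : ∀ ω, f (fun i => X i ω) = F (fun i => X i ω, fun i => X i ω) := fun ω => by
    simp [F]
  have hX₁ : ∀ ω, f (fun i => if i = z then X'' i ω else X i ω)
      = F (fun i => if (i : Fin n) = z then X'' i ω else X i ω, fun i => X i ω) := fun ω => by
    congr 1
    funext i
    by_cases hiA : i ∈ A
    · simp [hiA, ne_of_mem_of_not_mem hiA hA]
    · simp [hiA]
  have hXA : ∀ ω, f (resample X X' A ω) = F (fun i => X i ω, fun i => X' i ω) := fun ω => rfl
  simp only [hX, hX₁, hXA] at hL2 ⊢
  exact integral_resampled_mul_le (by fun_prop)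
    (measurable_pi_lambda _ fun i => by split_ifs <;> fun_prop) (by fun_prop) (by fun_prop)
    (indepFun_restrict_update_restrict hY hindep z) (indepFun_restrict_restrict hY hindep)
    (identDistrib_restrict_update_restrict hmeas hindep hid' z)
    (identDistrib_restrict_restrict hindep hid) hF hL2
end
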